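/- For any partial n-sun H_n, Z(H_n) ≤ sdim(H_n). -/

import Mathlib

open SimpleGraph

/-- One step of the zero forcing color-change rule: add every white vertex that is
the unique white neighbor of some black vertex. -/
def zfStep {V : Type*} (G : SimpleGraph V) (B : Set V) : Set V :=
  B ∪ {w | ∃ u ∈ B, G.Adj u w ∧ ∀ x, G.Adj u x → x ∉ B → x = w}

/-- `S` is a zero forcing set if iterating the color-change rule blackens all vertices. -/
def IsZeroForcingSet {V : Type*} (G : SimpleGraph V) (S : Set V) : Prop :=
  ∃ n : ℕ, (zfStep G)^[n] S = Set.univ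

/-- The zero forcing number: minimum cardinality of a zero forcing set. -/
noncomputable def zeroForcingNumber {V : Type*} (G : SimpleGraph V) : ℕ :=
  sInf {n | ∃ S : Set V, S.ncard = n ∧ IsZeroForcingSet G S}

/-- A (finite) graph is a path graph: nonempty, connected, acyclic, max degree ≤ 2. -/
def IsPathGraph {V : Type*} (G : SimpleGraph V) : Prop :=
  Nonempty V ∧ G.Connected ∧ G.IsAcyclic ∧ ∀ v : V, (G.neighborSet v).ncard ≤ 2

/-- The path cover number: minimum number of vertex-disjoint induced paths covering `V`. -/
noncomputable def pathCoverNumber {V : Type*} (G : SimpleGraph V) : ℕ :=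
  sInf {n | ∃ P : Finset (Set V), P.card = n ∧
    (∀ S ∈ P, IsPathGraph (G.induce S)) ∧
    (P : Set (Set V)).PairwiseDisjoint id ∧ ⋃₀ (P : Set (Set V)) = Set.univ}

/-- `u` lies on an `x`–`v` geodesic. -/
def LiesBetween {V : Type*} (G : SimpleGraph V) (x u v : V) : Prop :=
  G.dist x u + G.dist u v = G.dist x v

/-- `x` strongly resolves the pair `u, v`. -/
def StronglyResolves {V : Type*} (G : SimpleGraph V) (x u v : V) : Prop :=
  LiesBetween G x u v ∨ LiesBetween G x v u

/-- `W` is a strong resolving set of `G`. -/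
def IsStrongResolvingSet {V : Type*} (G : SimpleGraph V) (W : Set V) : Prop :=
  ∀ u v : V, u ≠ v → ∃ x ∈ W, StronglyResolves G x u v

/-- The strong metric dimension: minimum cardinality of a strong resolving set. -/
noncomputable def sdim {V : Type*} (G : SimpleGraph V) : ℕ :=
  sInf {n | ∃ W : Set V, W.ncard = n ∧ IsStrongResolvingSet G W}

/-- A leaf is a vertex of degree one. -/
def IsLeaf {V : Type*} (G : SimpleGraph V) (v : V) : Prop :=
  (G.neighborSet v).ncard = 1

/-- `σ(G)`: the number of leaves of `G`. -/
noncomputable def leafCount {V : Type*} (G : SimpleGraph V) : ℕ :=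
  {v | IsLeaf G v}.ncard

/-- The partial `n`-sun: the cycle `C_n` with one pendant leaf attached to each vertex in `U`. -/
def partialSun (n : ℕ) (U : Finset (Fin n)) : SimpleGraph (Fin n ⊕ {x // x ∈ U}) :=
  SimpleGraph.fromRel (fun a b =>
    match a, b with
    | Sum.inl i, Sum.inl j => (cycleGraph n).Adj i j
    | Sum.inl i, Sum.inr x => (x : Fin n) = i
    | _, _ => False)

/-!
Both sides are compared with `⌈n/2⌉`. For the zero forcing number, blacken the cycle vertices
`0, 1, 3, 5, …` (or instead their pendant leaves, which force them): each blackened odd vertex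
forces the next even one, `0` forces the last vertex, and then every cycle vertex forces its leaf.
For the strong metric dimension, two cycle vertices `i` and `i + ⌊n/2⌋` are at the maximal
distance `⌊n/2⌋`, so only a vertex sitting at one of them can strongly resolve them (a leaf
behaves like its cycle vertex). Hence the projection of a strong resolving set onto the cycle
meets every such antipodal pair and has at least `⌈n/2⌉` elements.
-/

open scoped Fin.NatCast Fin.CommRing

namespace SimpleGraph

variable {V : Type*} {G : SimpleGraph V}

theorem subset_zfStep (B : Set V) : B ⊆ zfStep G B :=
  Set.subset_union_left

theorem mem_of_zfStep_subset {C : Set V} (hC : zfStep G C ⊆ C) {u w : V} (hu : u ∈ C)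
    (huw : G.Adj u w) (hothers : ∀ x, G.Adj u x → x ≠ w → x ∈ C) : w ∈ C :=
  hC <| .inr ⟨u, hu, huw, fun x hx hxC => by_contra fun hxw => hxC (hothers x hx hxw)⟩

theorem isZeroForcingSet_of_forall_closed [Finite V] {S : Set V}
    (h : ∀ C, S ⊆ C → zfStep G C ⊆ C → C = Set.univ) : IsZeroForcingSet G S := by
  have hmono : Monotone fun t => (zfStep G)^[t] S :=
    monotone_nat_of_le_succ fun t => by
      rw [Function.iterate_succ_apply']
      exact subset_zfStep _
  obtain ⟨t, ht⟩ := WellFoundedGT.monotone_chain_condition ⟨_, hmono⟩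
  refine ⟨t, h _ (hmono t.zero_le) ?_⟩
  rw [← Function.iterate_succ_apply' (zfStep G)]
  exact (ht (t + 1) t.le_succ).ge

theorem zeroForcingNumber_le_ncard {S : Set V} (hS : IsZeroForcingSet G S) :
    zeroForcingNumber G ≤ S.ncard :=
  Nat.sInf_le ⟨S, rfl, hS⟩

theorem isStrongResolvingSet_univ : IsStrongResolvingSet G Set.univ :=
  fun u _ _ => ⟨u, trivial, .inl (by simp [LiesBetween])⟩

theorem le_sdim {k : ℕ} (h : ∀ W, IsStrongResolvingSet G W → k ≤ W.ncard) : k ≤ sdim G :=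
  le_csInf ⟨_, _, rfl, isStrongResolvingSet_univ⟩ fun _ ⟨W, hW, hres⟩ => hW ▸ h W hres

theorem Walk.le_add_length {f : V → ℕ} (hf : ∀ a b, G.Adj a b → f b ≤ f a + 1) {u v : V}
    (p : G.Walk u v) : f v ≤ f u + p.length := by
  induction p with
  | nil => simp
  | cons h _ ih =>
    have := hf _ _ h
    rw [Walk.length_cons]
    omega

theorem Reachable.le_add_dist {f : V → ℕ} (hf : ∀ a b, G.Adj a b → f b ≤ f a + 1)
    {u v : V} (h : G.Reachable u v) : f v ≤ f u + G.dist u v := by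
  obtain ⟨p, hp⟩ := h.exists_walk_length_eq_dist
  exact hp ▸ p.le_add_length hf

theorem Reachable.eq_of_liesBetween {x a b : V} (hxa : G.Reachable x a)
    (h : LiesBetween G x a b) (hb : G.dist x b ≤ G.dist a b) : x = a :=
  hxa.dist_eq_zero_iff.mp (by unfold LiesBetween at h; omega)

theorem dist_eq_dist_add_one_of_neighborSet_eq {x y v : V} (hx : G.neighborSet x = {y})
    (hv : G.Reachable y v) (hvx : v ≠ x) : G.dist x v = G.dist y v + 1 := by
  have hxy : G.Adj x y := by simp [← mem_neighborSet, hx]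
  apply le_antisymm
  · obtain ⟨p, hp⟩ := hv.exists_walk_length_eq_dist
    simpa [hp] using dist_le (.cons hxy p)
  · obtain ⟨p, hp⟩ := (hxy.reachable.trans hv).exists_walk_length_eq_dist
    cases p with
    | nil => exact absurd rfl hvx
    | cons h q =>
      obtain rfl : _ = y := by simpa [← mem_neighborSet, hx] using h
      simpa [← hp] using dist_le q

theorem liesBetween_iff_of_neighborSet_eq {x y a b : V} (hx : G.neighborSet x = {y})
    (ha : G.Reachable y a) (hb : G.Reachable y b) (hax : a ≠ x) (hbx : b ≠ x) :
    LiesBetween G x a b ↔ LiesBetween G y a b := by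
  simp only [LiesBetween, dist_eq_dist_add_one_of_neighborSet_eq hx ha hax,
    dist_eq_dist_add_one_of_neighborSet_eq hx hb hbx]
  omega

theorem cycleGraph_adj_iff {n : ℕ} [NeZero n] (hn : 2 ≤ n) {i j : Fin n} :
    (cycleGraph n).Adj i j ↔ j = i + 1 ∨ j = i - 1 := by
  obtain ⟨m, rfl⟩ := Nat.exists_eq_add_of_le' hn
  rw [← mem_neighborSet, cycleGraph_neighborSet]
  simp [or_comm]

end SimpleGraph

theorem card_le_two_mul_ncard_of_forall_mem_or_add_mem {A : Type*} [Add A]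
    [IsRightCancelAdd A] [Finite A] {s : Set A} {k : A} (h : ∀ a, a ∈ s ∨ a + k ∈ s) :
    Nat.card A ≤ 2 * s.ncard := by
  have hcompl : sᶜ.ncard ≤ s.ncard := by
    rw [← Set.ncard_image_of_injective sᶜ (add_left_injective k)]
    exact Set.ncard_le_ncard (by rintro _ ⟨a, ha, rfl⟩; exact (h a).resolve_left ha)
  have := Set.ncard_add_ncard_compl s
  omega

/-- The distance from `0` to `x` along the cycle on `Fin n`. -/
def cyclicNorm {n : ℕ} (x : Fin n) : ℕ := min x.val (n - x.val)

theorem cyclicNorm_add_one_le {n : ℕ} [NeZero n] (x : Fin n) :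
    cyclicNorm (x + 1) ≤ cyclicNorm x + 1 := by
  have hsum := Fin.coe_int_add_eq_ite x 1
  have hone : (1 : Fin n).val = 1 % n := Fin.val_one' n
  have := x.is_lt
  unfold cyclicNorm
  rcases Nat.lt_or_ge 1 n with h | h
  · rw [Nat.mod_eq_of_lt h] at hone
    split_ifs at hsum <;> omega
  · obtain rfl : n = 1 := by omega
    simp [Fin.val_eq_zero]

theorem cyclicNorm_sub_one_le {n : ℕ} [NeZero n] (x : Fin n) :
    cyclicNorm (x - 1) ≤ cyclicNorm x + 1 := by
  have hdiff := Fin.coe_int_sub_eq_ite x 1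
  have hone : (1 : Fin n).val = 1 % n := Fin.val_one' n
  have := x.is_lt
  unfold cyclicNorm
  rcases Nat.lt_or_ge 1 n with h | h
  · rw [Nat.mod_eq_of_lt h] at hone
    split_ifs at hdiff <;> omega
  · obtain rfl : n = 1 := by omega
    simp [Fin.val_eq_zero]

namespace partialSun

variable {n : ℕ} {U : Finset (Fin n)} {C : Set (Fin n ⊕ U)}

theorem adj_inl_inl {i j : Fin n} :
    (partialSun n U).Adj (.inl i) (.inl j) ↔ (cycleGraph n).Adj i j := by
  simp only [partialSun, fromRel_adj, ne_eq, Sum.inl.injEq, (cycleGraph n).adj_comm j i, or_self,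
    and_iff_right_iff_imp]
  exact fun h he => h.ne he

theorem adj_inr_iff {x : U} {b : Fin n ⊕ U} :
    (partialSun n U).Adj (.inr x) b ↔ b = .inl x := by
  cases b <;> simp [partialSun, eq_comm]

theorem neighborSet_inr (x : U) : (partialSun n U).neighborSet (.inr x) = {.inl x} :=
  Set.ext fun _ => adj_inr_iff

def proj : Fin n ⊕ U → Fin n := Sum.elim id (↑)

theorem reachable_inl_proj (v : Fin n ⊕ U) : (partialSun n U).Reachable (.inl (proj v)) v := by
  cases v with
  | inl i => rfl
  | inr x => exact (adj_inr_iff.mpr rfl).symm.reachable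

variable (U) in
def leafOrSelf (i : Fin n) : Fin n ⊕ U :=
  if h : i ∈ U then .inr ⟨i, h⟩ else .inl i

theorem inl_mem_of_leafOrSelf_mem (hC : zfStep (partialSun n U) C ⊆ C) {i : Fin n}
    (hi : leafOrSelf U i ∈ C) : .inl i ∈ C ∧ ∀ h : i ∈ U, .inr ⟨i, h⟩ ∈ C := by
  unfold leafOrSelf at hi
  split_ifs at hi with h
  · refine ⟨mem_of_zfStep_subset hC hi (adj_inr_iff.mpr rfl) fun x hx hne => ?_, fun _ => hi⟩
    exact absurd (adj_inr_iff.mp hx) hne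
  · exact ⟨hi, fun h' => absurd h' h⟩

variable [NeZero n]

theorem adj_inl_iff (hn : 2 ≤ n) {i : Fin n} {b : Fin n ⊕ U} :
    (partialSun n U).Adj (.inl i) b ↔
      b = .inl (i + 1) ∨ b = .inl (i - 1) ∨ ∃ h : i ∈ U, b = .inr ⟨i, h⟩ := by
  cases b with
  | inl j => simp [adj_inl_inl, cycleGraph_adj_iff hn]
  | inr x => simpa [partialSun, Subtype.ext_iff] using fun h => h ▸ x.2

theorem connected : (partialSun n U).Connected := by
  have hcycle (i j : Fin n) : (partialSun n U).Reachable (.inl i) (.inl j) :=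
    (cycleGraph_preconnected i j).map ⟨Sum.inl, adj_inl_inl.mpr⟩
  have : Nonempty (Fin n ⊕ U) := ⟨.inl 0⟩
  exact .mk fun u v =>
    (reachable_inl_proj u).symm.trans ((hcycle _ _).trans (reachable_inl_proj v))

theorem dist_inl_add_le (hn : 2 ≤ n) (i : Fin n) (m : ℕ) :
    (partialSun n U).dist (.inl i) (.inl (i + m)) ≤ m := by
  induction m with
  | zero => simp
  | succ m ih =>
    have hstep : (partialSun n U).dist (.inl (i + m)) (.inl (i + ↑(m + 1))) = 1 := by
      rw [dist_eq_one_iff_adj, adj_inl_iff hn, Nat.cast_succ, ← add_assoc]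
      exact .inl rfl
    have := connected.dist_triangle (G := partialSun n U) (u := .inl i) (v := .inl (i + m))
      (w := .inl (i + ↑(m + 1)))
    omega

theorem dist_inl_inl (hn : 2 ≤ n) (i j : Fin n) :
    (partialSun n U).dist (.inl i) (.inl j) = cyclicNorm (j - i) := by
  refine le_antisymm (le_min ?_ ?_) ?_
  · simpa using dist_inl_add_le (U := U) hn i (j - i).val
  · have hback : (i - j).val ≤ n - (j - i).val := by
      have hij := Fin.coe_int_sub_eq_ite i j
      have hji := Fin.coe_int_sub_eq_ite j i
      split_ifs at hij hji <;> omega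
    rw [dist_comm]
    simpa using (dist_inl_add_le (U := U) hn j (i - j).val).trans hback
  · have hlip : ∀ a b, (partialSun n U).Adj a b →
        cyclicNorm (proj b - i) ≤ cyclicNorm (proj a - i) + 1 := by
      intro a b hab
      cases a with
      | inr x => simp [adj_inr_iff.mp hab, proj]
      | inl k =>
        rcases (adj_inl_iff hn).mp hab with rfl | rfl | ⟨_, rfl⟩
        · simpa [proj, add_sub_right_comm] using cyclicNorm_add_one_le (k - i)
        · simpa [proj, sub_right_comm] using cyclicNorm_sub_one_le (k - i)
        · simp [proj]
    simpa [proj, cyclicNorm] using (connected.preconnected (.inl i) (.inl j)).le_add_dist hlip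

theorem proj_eq_of_liesBetween (hn : 2 ≤ n) {x : Fin n ⊕ U} {a b : Fin n}
    (hab : (partialSun n U).dist (.inl a) (.inl b) = n / 2)
    (h : LiesBetween (partialSun n U) x (.inl a) (.inl b)) : proj x = a := by
  have hfar (c : Fin n) :
      (partialSun n U).dist (.inl c) (.inl b) ≤ (partialSun n U).dist (.inl a) (.inl b) := by
    rw [hab, dist_inl_inl hn, cyclicNorm]
    omega
  have hcycle {c : Fin n} (h : LiesBetween (partialSun n U) (.inl c) (.inl a) (.inl b)) : c = a :=
    Sum.inl_injective ((connected.preconnected _ _).eq_of_liesBetween h (hfar c))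
  cases x with
  | inl c => exact hcycle h
  | inr y =>
    rw [liesBetween_iff_of_neighborSet_eq (neighborSet_inr y) (connected.preconnected _ _)
      (connected.preconnected _ _) Sum.inl_ne_inr Sum.inl_ne_inr] at h
    exact hcycle h

theorem mem_or_add_half_mem_proj_image (hn : 2 ≤ n) {W : Set (Fin n ⊕ U)}
    (hW : IsStrongResolvingSet (partialSun n U) W) (i : Fin n) :
    i ∈ proj '' W ∨ i + ↑(n / 2) ∈ proj '' W := by
  have hhalf : (partialSun n U).dist (.inl i) (.inl (i + ↑(n / 2))) = n / 2 := by
    rw [dist_inl_inl hn, add_sub_cancel_left, cyclicNorm, Fin.val_natCast,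
      Nat.mod_eq_of_lt (by omega)]
    omega
  have hne : (Sum.inl i : Fin n ⊕ U) ≠ .inl (i + ↑(n / 2)) := fun h => by
    rw [h, dist_self] at hhalf
    omega
  obtain ⟨x, hxW, hx | hx⟩ := hW _ _ hne
  · exact .inl ⟨x, hxW, proj_eq_of_liesBetween hn hhalf hx⟩
  · exact .inr ⟨x, hxW, proj_eq_of_liesBetween hn (dist_comm.trans hhalf) hx⟩

theorem ceil_half_le_sdim (hn : 2 ≤ n) : (n + 1) / 2 ≤ sdim (partialSun n U) :=
  le_sdim fun W hW => by
    have hcover := card_le_two_mul_ncard_of_forall_mem_or_add_mem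
      (mem_or_add_half_mem_proj_image hn hW)
    have hproj := Set.ncard_image_le (f := proj) W.toFinite
    rw [Nat.card_eq_fintype_card, Fintype.card_fin] at hcover
    omega

variable (n U) in
/-- The cycle vertices `0, 1, 3, …, 2⌈n/2⌉ - 3`, each replaced by its leaf when it has one;
`m = 0` gives `0` since `2 * 0 - 1 = 0` in `ℕ`. -/
def forcingSet : Finset (Fin n ⊕ U) :=
  (Finset.range ((n + 1) / 2)).image fun m => leafOrSelf U ((2 * m - 1 : ℕ) : Fin n)

theorem ncard_forcingSet_le : (forcingSet n U : Set (Fin n ⊕ U)).ncard ≤ (n + 1) / 2 := by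
  rw [Set.ncard_coe_finset]
  exact Finset.card_image_le.trans (Finset.card_range _).le

theorem inl_add_one_mem (hC : zfStep (partialSun n U) C ⊆ C) (hn : 2 ≤ n)
    {i : Fin n} (hi : leafOrSelf U i ∈ C) (hprev : .inl (i - 1) ∈ C) : .inl (i + 1) ∈ C := by
  obtain ⟨hiC, hleaf⟩ := inl_mem_of_leafOrSelf_mem hC hi
  refine mem_of_zfStep_subset hC hiC ((adj_inl_iff hn).mpr (.inl rfl)) fun x hx hne => ?_
  rcases (adj_inl_iff hn).mp hx with rfl | rfl | ⟨h, rfl⟩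
  exacts [absurd rfl hne, hprev, hleaf h]

theorem inl_sub_one_mem (hC : zfStep (partialSun n U) C ⊆ C) (hn : 2 ≤ n)
    {i : Fin n} (hi : leafOrSelf U i ∈ C) (hnext : .inl (i + 1) ∈ C) : .inl (i - 1) ∈ C := by
  obtain ⟨hiC, hleaf⟩ := inl_mem_of_leafOrSelf_mem hC hi
  refine mem_of_zfStep_subset hC hiC ((adj_inl_iff hn).mpr (.inr (.inl rfl))) fun x hx hne => ?_
  rcases (adj_inl_iff hn).mp hx with rfl | rfl | ⟨h, rfl⟩
  exacts [hnext, absurd rfl hne, hleaf h]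

theorem inl_mem_of_forcingSet_subset (hC : zfStep (partialSun n U) C ⊆ C) (hn : 3 ≤ n)
    (hB : ↑(forcingSet n U) ⊆ C) (i : Fin n) : .inl i ∈ C := by
  have hgen (m : ℕ) (hm : m < (n + 1) / 2) : leafOrSelf U ((2 * m - 1 : ℕ) : Fin n) ∈ C :=
    hB (Finset.mem_image_of_mem _ (Finset.mem_range.mpr hm))
  have hzero : leafOrSelf U 0 ∈ C := by simpa using hgen 0 (by omega)
  have hodd (m : ℕ) (hm : 2 * m + 2 < n) : leafOrSelf U ((2 * m + 1 : ℕ) : Fin n) ∈ C := by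
    have := hgen (m + 1) (by omega)
    rwa [show 2 * (m + 1) - 1 = 2 * m + 1 by omega] at this
  have heven (m : ℕ) (hm : 2 * m < n) : .inl ((2 * m : ℕ) : Fin n) ∈ C := by
    induction m with
    | zero => simpa using (inl_mem_of_leafOrSelf_mem hC hzero).1
    | succ m ih =>
      have := inl_add_one_mem hC (by omega) (hodd m (by omega)) (by simpa using ih (by omega))
      convert this using 2
      push_cast
      ring
  rw [← Fin.cast_val_eq_self i]
  obtain ⟨m, hm | hm⟩ := Nat.even_or_odd' i.val
  · exact hm ▸ heven m (by omega)
  rcases Nat.lt_or_ge (2 * m + 2) n with hlt | hge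
  · exact hm ▸ (inl_mem_of_leafOrSelf_mem hC (hodd m hlt)).1
  · have hlast : ((i.val : ℕ) : Fin n) = 0 - 1 := by
      rw [zero_sub, eq_neg_iff_add_eq_zero, ← Nat.cast_add_one, show i.val + 1 = n by omega,
        Fin.natCast_self]
    have hone : .inl ((0 : Fin n) + 1) ∈ C := by
      simpa using (inl_mem_of_leafOrSelf_mem hC (hodd 0 (by omega))).1
    exact hlast ▸ inl_sub_one_mem hC (by omega) hzero hone

theorem isZeroForcingSet_forcingSet (hn : 3 ≤ n) :
    IsZeroForcingSet (partialSun n U) (forcingSet n U) :=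
  isZeroForcingSet_of_forall_closed fun C hB hC => by
    have hcycle := inl_mem_of_forcingSet_subset hC hn hB
    refine Set.eq_univ_of_forall fun v => ?_
    cases v with
    | inl i => exact hcycle i
    | inr x =>
      have hadj := (adj_inl_iff (U := U) (by omega)).mpr (.inr (.inr ⟨x.2, rfl⟩))
      refine mem_of_zfStep_subset hC (hcycle x) hadj fun y hy hne => ?_
      rcases (adj_inl_iff (by omega)).mp hy with rfl | rfl | ⟨_, rfl⟩
      exacts [hcycle _, hcycle _, absurd rfl hne]

theorem zeroForcingNumber_le_ceil_half (hn : 3 ≤ n) :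
    zeroForcingNumber (partialSun n U) ≤ (n + 1) / 2 :=
  (zeroForcingNumber_le_ncard (isZeroForcingSet_forcingSet hn)).trans ncard_forcingSet_le

end partialSun

/-- For any partial `n`-sun, the zero forcing number is at most the strong metric dimension. -/
theorem zeroForcingNumber_partialSun_le_sdim (n : ℕ) (h3 : 3 ≤ n) (U : Finset (Fin n)) :
    zeroForcingNumber (partialSun n U) ≤ sdim (partialSun n U) := by
  have : NeZero n := ⟨by omega⟩
  exact (partialSun.zeroForcingNumber_le_ceil_half h3).trans
    (partialSun.ceil_half_le_sdim (by omega))
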